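/- arXiv:2104.00049 — 3 statements merged into one kernel-verified Lean document; each statement's English description precedes it below -/
import Mathlib

section
/- Let n ≥ 2, let F₀, F₁ : ℝⁿ → ℝ be smooth with ∂F₀/∂x₁(x) ≠ 0 for all x ∈ ℝⁿ, and let ξ⁰ : ℝⁿ → ℝⁿ be a smooth vector field satisfying ∑_{i=1}^{n} ξ⁰ᵢ(x) ∂F₀/∂xᵢ(x) = 0 for all x. Then there exists a smooth vector field ξ¹ : ℝⁿ → ℝⁿ such that ∑_{i=1}^{n} ξ¹ᵢ(x) ∂F₀/∂xᵢ(x) = − ∑_{i=1}^{n} ξ⁰ᵢ(x) ∂F₁/∂xᵢ(x) for all x ∈ ℝⁿ. -/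
/-- The partial derivative of `F : ℝⁿ → ℝ` in the `i`-th coordinate direction. -/
noncomputable def pd {n : ℕ} (F : (Fin n → ℝ) → ℝ) (i : Fin n) (x : Fin n → ℝ) : ℝ :=
  fderiv ℝ F x (Pi.single i 1)

lemma pd_contDiff {n : ℕ} {F : (Fin n → ℝ) → ℝ} (hF : ContDiff ℝ (⊤ : ℕ∞) F) (i : Fin n) :
    ContDiff ℝ (⊤ : ℕ∞) (pd F i) := by
  have h := (hF.fderiv_right (m := (⊤ : ℕ∞)) le_rfl).clm_apply
    (contDiff_const (c := (Pi.single i 1 : Fin n → ℝ)))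
  exact h

/-- Every exact point symmetry `ξ0` of the unperturbed algebraic equation `F₀ = const`
is stable: there exists a smooth first-order deformation `ξ1` solving the BGI
determining equation `∑ᵢ ξ1ᵢ ∂F₀/∂xᵢ = − ∑ᵢ ξ0ᵢ ∂F₁/∂xᵢ`. -/
theorem approximate_symmetry_of_perturbed_algebraic_equation
    (n : ℕ) (hn : 2 ≤ n)
    (F₀ F₁ : (Fin n → ℝ) → ℝ)
    (hF₀ : ContDiff ℝ (⊤ : ℕ∞) F₀) (hF₁ : ContDiff ℝ (⊤ : ℕ∞) F₁)
    (hne : ∀ x : Fin n → ℝ, pd F₀ ⟨0, by omega⟩ x ≠ 0)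
    (ξ0 : (Fin n → ℝ) → (Fin n → ℝ)) (hξ0 : ContDiff ℝ (⊤ : ℕ∞) ξ0)
    (hsym : ∀ x : Fin n → ℝ, ∑ i, ξ0 x i * pd F₀ i x = 0) :
    ∃ ξ1 : (Fin n → ℝ) → (Fin n → ℝ), ContDiff ℝ (⊤ : ℕ∞) ξ1 ∧
      ∀ x : Fin n → ℝ,
        ∑ i, ξ1 x i * pd F₀ i x = -∑ i, ξ0 x i * pd F₁ i x := by
  set i0 : Fin n := ⟨0, by omega⟩
  set g : (Fin n → ℝ) → ℝ := fun x => (-∑ i, ξ0 x i * pd F₁ i x) / pd F₀ i0 x with hg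
  have hgsmooth : ContDiff ℝ (⊤ : ℕ∞) g := by
    apply ContDiff.div
    · apply ContDiff.neg
      exact ContDiff.sum fun i _ =>
        ((contDiff_pi.1 hξ0 i)).mul (pd_contDiff hF₁ i)
    · exact pd_contDiff hF₀ i0
    · exact hne
  refine ⟨fun x => Pi.single i0 (g x), ?_, ?_⟩
  · apply contDiff_pi.2
    intro i
    by_cases h : i = i0
    · subst h
      simpa using hgsmooth
    · have heq : ∀ x : Fin n → ℝ, (Pi.single i0 (g x) : Fin n → ℝ) i = 0 := fun x => by
        simp [Pi.single_apply, Ne.symm h]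
      simp only [heq]
      exact contDiff_const
  · intro x
    rw [Finset.sum_eq_single i0]
    · simp only [Pi.single_eq_same]
      show g x * pd F₀ i0 x = _
      rw [hg]
      simp only [neg_div]
      rw [neg_mul, div_mul_cancel₀ _ (hne x)]
    · intro i _ h
      simp [Pi.single_apply, h]
    · intro h; exact absurd (Finset.mem_univ i0) h
end

section
/- Let C₁, C₂, C₃, C₆, C₇ ∈ ℝ and let ξ¹, η¹ : ℝ² → ℝ be smooth. Then ξ¹ and η¹ satisfy the system η¹_xx = C₁ y + C₂, 2 η¹_xy − ξ¹_xx = 2 C₁ x + (1/2) C₃ y + C₇, η¹_yy − 2 ξ¹_xy = C₃ x + 2 C₆, ξ¹_yy = 0 identically on ℝ² if and only if there exist constants a₁, …, a₈ ∈ ℝ such that ξ¹(x,y) = −(C₃/4) x² y − C₆ x y − (C₇/2) x² + a₁ x² + (a₂/2) x y + a₃ x + a₄ y + a₅ and η¹(x,y) = (C₁/2) x² y + (C₂/2) x² + a₁ x y + (a₂/2) y² + a₆ x + a₇ y + a₈. -/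
/-- Partial derivative with respect to the first variable. -/
noncomputable def px (f : ℝ → ℝ → ℝ) : ℝ → ℝ → ℝ := fun x y => deriv (fun t => f t y) x

/-- Partial derivative with respect to the second variable. -/
noncomputable def py (f : ℝ → ℝ → ℝ) : ℝ → ℝ → ℝ := fun x y => deriv (fun t => f x t) y

lemma hasDerivAt_quad (a b c x : ℝ) :
    HasDerivAt (fun t : ℝ => a + b * t + c * t ^ 2) (b + 2 * c * x) x := by
  have h1 : HasDerivAt (fun t : ℝ => a + b * t) b x := by
    simpa using ((hasDerivAt_id x).const_mul b).const_add a
  have h2 : HasDerivAt (fun t : ℝ => c * t ^ 2) (2 * c * x) x := by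
    have := (hasDerivAt_pow 2 x).const_mul c
    simpa [mul_comm, mul_assoc, mul_left_comm] using this
  exact h1.add h2

lemma deriv_quad (f : ℝ → ℝ) (a b c : ℝ) (hf : ∀ t, f t = a + b * t + c * t ^ 2) (x : ℝ) :
    deriv f x = b + 2 * c * x := by
  have : f = fun t => a + b * t + c * t ^ 2 := funext hf
  rw [this, (hasDerivAt_quad a b c x).deriv]

lemma integrate (f : ℝ → ℝ) (hf : Differentiable ℝ f) (b k : ℝ)
    (h : ∀ t, deriv f t = b + k * t) (x : ℝ) :
    f x = f 0 + b * x + k / 2 * x ^ 2 := by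
  have key : ∀ t : ℝ, deriv (fun s => f s - (b * s + k / 2 * s ^ 2)) t = 0 := by
    intro t
    have h1 : HasDerivAt f (b + k * t) t := by
      rw [← h t]; exact (hf t).hasDerivAt
    have h2 : HasDerivAt (fun s : ℝ => b * s + k / 2 * s ^ 2) (b + k * t) t := by
      have := hasDerivAt_quad 0 b (k / 2) t
      simp only [zero_add] at this
      convert this using 1; ring
    have := (h1.sub h2).deriv
    simp only [sub_self] at this; exact this
  have hd : Differentiable ℝ (fun s => f s - (b * s + k / 2 * s ^ 2)) := by
    fun_prop
  have := is_const_of_deriv_eq_zero hd key x 0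
  simp at this
  linarith [this]

/-- Complete solution of the split determining system for the first-order
deformation components `(ξ¹, η¹)` of approximate point symmetries of
`y'' = ε y'`. -/
theorem deformation_components_for_ypp_eps_yp
    (C₁ C₂ C₃ C₆ C₇ : ℝ) (ξ1 η1 : ℝ → ℝ → ℝ)
    (hξ1 : ContDiff ℝ (⊤ : ℕ∞) (Function.uncurry ξ1))
    (hη1 : ContDiff ℝ (⊤ : ℕ∞) (Function.uncurry η1)) :
    (∀ x y : ℝ,
      px (px η1) x y = C₁ * y + C₂ ∧
      2 * px (py η1) x y - px (px ξ1) x y = 2 * C₁ * x + 1 / 2 * C₃ * y + C₇ ∧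
      py (py η1) x y - 2 * px (py ξ1) x y = C₃ * x + 2 * C₆ ∧
      py (py ξ1) x y = 0)
    ↔ ∃ a₁ a₂ a₃ a₄ a₅ a₆ a₇ a₈ : ℝ, ∀ x y : ℝ,
        ξ1 x y = -(C₃ / 4) * x ^ 2 * y - C₆ * x * y - C₇ / 2 * x ^ 2
          + a₁ * x ^ 2 + a₂ / 2 * x * y + a₃ * x + a₄ * y + a₅ ∧
        η1 x y = C₁ / 2 * x ^ 2 * y + C₂ / 2 * x ^ 2
          + a₁ * x * y + a₂ / 2 * y ^ 2 + a₆ * x + a₇ * y + a₈ := by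
  constructor
  · intro h
    -- slice smoothness
    have hξx : ∀ y, ContDiff ℝ (⊤ : ℕ∞) (fun x => ξ1 x y) :=
      fun y => hξ1.comp (contDiff_id.prodMk contDiff_const)
    have hξy : ∀ x, ContDiff ℝ (⊤ : ℕ∞) (fun y => ξ1 x y) :=
      fun x => hξ1.comp (contDiff_const.prodMk contDiff_id)
    have hηx : ∀ y, ContDiff ℝ (⊤ : ℕ∞) (fun x => η1 x y) :=
      fun y => hη1.comp (contDiff_id.prodMk contDiff_const)
    have hηy : ∀ x, ContDiff ℝ (⊤ : ℕ∞) (fun y => η1 x y) :=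
      fun x => hη1.comp (contDiff_const.prodMk contDiff_id)
    set A : ℝ → ℝ := fun x => ξ1 x 1 - ξ1 x 0 with hA_def
    set B : ℝ → ℝ := fun x => ξ1 x 0 with hB_def
    set E : ℝ → ℝ := fun y => η1 0 y with hE_def
    set D : ℝ → ℝ := fun y => η1 1 y - η1 0 y - (C₁ * y + C₂) / 2 with hD_def
    have hA : ContDiff ℝ (⊤ : ℕ∞) A := by rw [hA_def]; exact (hξx 1).sub (hξx 0)
    have hB : ContDiff ℝ (⊤ : ℕ∞) B := by rw [hB_def]; exact hξx 0
    have hE : ContDiff ℝ (⊤ : ℕ∞) E := by rw [hE_def]; exact hηy 0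
    have hD : ContDiff ℝ (⊤ : ℕ∞) D := by
      rw [hD_def]
      exact ((hηy 1).sub (hηy 0)).sub (ContDiff.div_const (by fun_prop) 2)
    have hA1 : Differentiable ℝ A := hA.differentiable (by simp)
    have hB1 : Differentiable ℝ B := hB.differentiable (by simp)
    have hE1 : Differentiable ℝ E := hE.differentiable (by simp)
    have hD1 : Differentiable ℝ D := hD.differentiable (by simp)
    have hA2 : Differentiable ℝ (deriv A) :=
      ((contDiff_infty_iff_deriv.mp (hA.of_le (by simp))).2).differentiable (by simp)
    have hB2 : Differentiable ℝ (deriv B) :=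
      ((contDiff_infty_iff_deriv.mp (hB.of_le (by simp))).2).differentiable (by simp)
    have hE2 : Differentiable ℝ (deriv E) :=
      ((contDiff_infty_iff_deriv.mp (hE.of_le (by simp))).2).differentiable (by simp)
    have hD2 : Differentiable ℝ (deriv D) :=
      ((contDiff_infty_iff_deriv.mp (hD.of_le (by simp))).2).differentiable (by simp)
    -- Step 1 : ξ1 x y = B x + y * A x
    have step1 : ∀ x y : ℝ, ξ1 x y = B x + y * A x := by
      intro x y
      have hg : ContDiff ℝ (⊤ : ℕ∞) (fun t => ξ1 x t) := hξy x
      have hg1 : Differentiable ℝ (fun t => ξ1 x t) := hg.differentiable (by simp)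
      have hg2 : Differentiable ℝ (deriv (fun t => ξ1 x t)) :=
        ((contDiff_infty_iff_deriv.mp (hg.of_le (by simp))).2).differentiable (by simp)
      have hd2 : ∀ s, deriv (deriv (fun t : ℝ => ξ1 x t)) s = 0 + 0 * s := by
        intro s
        have hv := (h x s).2.2.2
        simp only [py] at hv
        simpa using hv
      have hd1 : ∀ s, deriv (fun t : ℝ => ξ1 x t) s
          = deriv (fun t : ℝ => ξ1 x t) 0 + 0 * s := by
        intro s
        have := integrate _ hg2 0 0 hd2 s
        simpa using this
      have hval := integrate _ hg1 (deriv (fun t : ℝ => ξ1 x t) 0) 0 hd1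
      have h1 := hval 1
      have hy := hval y
      simp only [hA_def, hB_def]
      linear_combination hy - y * h1
    have step2 : ∀ x y : ℝ, η1 x y = E y + x * D y + (C₁ * y + C₂) / 2 * x ^ 2 := by
      intro x y
      have hg : ContDiff ℝ (⊤ : ℕ∞) (fun t => η1 t y) := hηx y
      have hg1 : Differentiable ℝ (fun t => η1 t y) := hg.differentiable (by simp)
      have hg2 : Differentiable ℝ (deriv (fun t => η1 t y)) :=
        ((contDiff_infty_iff_deriv.mp (hg.of_le (by simp))).2).differentiable
          (by simp)
      have hd2 : ∀ s, deriv (deriv (fun t : ℝ => η1 t y)) s = (C₁ * y + C₂) + 0 * s := by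
        intro s
        have hv := (h s y).1
        simp only [px] at hv
        simpa using hv
      have hd1 : ∀ s, deriv (fun t : ℝ => η1 t y) s
          = deriv (fun t : ℝ => η1 t y) 0 + (C₁ * y + C₂) * s := by
        intro s
        have := integrate _ hg2 (C₁ * y + C₂) 0 hd2 s
        linear_combination this
      have hval := integrate _ hg1 (deriv (fun t : ℝ => η1 t y) 0) (C₁ * y + C₂) hd1
      have h1 := hval 1
      have hx := hval x
      simp only [hE_def, hD_def]
      linear_combination hx - x * h1
    have hpyξ : ∀ x y : ℝ, py ξ1 x y = A x := by
      intro x y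
      show deriv (fun t => ξ1 x t) y = _
      rw [show (fun t => ξ1 x t) = (fun t => B x + t * A x) from funext fun t => step1 x t]
      have hder : HasDerivAt (fun t : ℝ => B x + t * A x) (A x) y := by
        simpa using ((hasDerivAt_id y).mul_const (A x)).const_add (B x)
      exact hder.deriv
    have hpxξ : ∀ x y : ℝ, px ξ1 x y = deriv B x + y * deriv A x := by
      intro x y
      show deriv (fun t => ξ1 t y) x = _
      rw [show (fun t => ξ1 t y) = (fun t => B t + y * A t) from funext fun t => step1 t y]
      exact ((hB1 x).hasDerivAt.add ((hA1 x).hasDerivAt.const_mul y)).deriv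
    have hpxpyξ : ∀ x y : ℝ, px (py ξ1) x y = deriv A x := by
      intro x y
      show deriv (fun t => py ξ1 t y) x = _
      rw [show (fun t => py ξ1 t y) = A from funext fun t => hpyξ t y]
    have hpxpxξ : ∀ x y : ℝ, px (px ξ1) x y
        = deriv (deriv B) x + y * deriv (deriv A) x := by
      intro x y
      show deriv (fun t => px ξ1 t y) x = _
      rw [show (fun t => px ξ1 t y) = (fun t => deriv B t + y * deriv A t) from
        funext fun t => hpxξ t y]
      exact ((hB2 x).hasDerivAt.add ((hA2 x).hasDerivAt.const_mul y)).deriv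
    have hpyη : ∀ x y : ℝ, py η1 x y = deriv E y + x * deriv D y + C₁ / 2 * x ^ 2 := by
      intro x y
      show deriv (fun t => η1 x t) y = _
      rw [show (fun t => η1 x t) = (fun t => E t + x * D t + (C₁ * t + C₂) / 2 * x ^ 2)
        from funext fun t => step2 x t]
      have h3 : HasDerivAt (fun t : ℝ => (C₁ * t + C₂) / 2 * x ^ 2) (C₁ / 2 * x ^ 2) y := by
        have h0 := hasDerivAt_quad (C₂ / 2 * x ^ 2) (C₁ / 2 * x ^ 2) 0 y
        have he : (fun t : ℝ => (C₁ * t + C₂) / 2 * x ^ 2)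
            = (fun t : ℝ => C₂ / 2 * x ^ 2 + C₁ / 2 * x ^ 2 * t + 0 * t ^ 2) := by
          funext t; ring
        rw [he]; simpa using h0
      exact (((hE1 y).hasDerivAt.add ((hD1 y).hasDerivAt.const_mul x)).add h3).deriv
    have hpxpyη : ∀ x y : ℝ, px (py η1) x y = deriv D y + C₁ * x := by
      intro x y
      have hq := deriv_quad (fun t => py η1 t y) (deriv E y) (deriv D y) (C₁ / 2)
        (fun t => by show py η1 t y = _; rw [hpyη t y]; ring) x
      show deriv (fun t => py η1 t y) x = _
      rw [hq]; ring
    have hpypyη : ∀ x y : ℝ, py (py η1) x y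
        = deriv (deriv E) y + x * deriv (deriv D) y := by
      intro x y
      show deriv (fun t => py η1 x t) y = _
      rw [show (fun t => py η1 x t) = (fun t => deriv E t + x * deriv D t + C₁ / 2 * x ^ 2)
        from funext fun t => hpyη x t]
      exact (((hE2 y).hasDerivAt.add ((hD2 y).hasDerivAt.const_mul x)).add_const _).deriv
    have e2 : ∀ x y : ℝ, 2 * (deriv D y + C₁ * x)
        - (deriv (deriv B) x + y * deriv (deriv A) x)
        = 2 * C₁ * x + 1 / 2 * C₃ * y + C₇ := by
      intro x y
      have hv := (h x y).2.1
      rw [hpxpyη x y, hpxpxξ x y] at hv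
      exact hv
    have e3 : ∀ x y : ℝ, (deriv (deriv E) y + x * deriv (deriv D) y) - 2 * deriv A x
        = C₃ * x + 2 * C₆ := by
      intro x y
      have hv := (h x y).2.2.1
      rw [hpypyη x y, hpxpyξ x y] at hv
      exact hv
    have hB'' : ∀ x : ℝ, deriv (deriv B) x = 2 * deriv D 0 - C₇ := fun x => by
      linear_combination - e2 x 0
    have hA'' : ∀ x : ℝ, deriv (deriv A) x
        = 2 * deriv D 1 - 2 * deriv D 0 - C₃ / 2 := fun x => by
      linear_combination - e2 x 1 - hB'' x
    have hD' : ∀ y : ℝ, deriv D y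
        = deriv D 0 + ((2 * deriv D 1 - 2 * deriv D 0 - C₃ / 2) / 2 + C₃ / 4) * y :=
      fun y => by
      linear_combination (e2 0 y) / 2 + (hB'' 0) / 2 + y / 2 * (hA'' 0)
    have hD'' : ∀ y : ℝ, deriv (deriv D) y
        = (2 * deriv D 1 - 2 * deriv D 0 - C₃ / 2) / 2 + C₃ / 4 := by
      intro y
      have hq := deriv_quad (deriv D) (deriv D 0)
        ((2 * deriv D 1 - 2 * deriv D 0 - C₃ / 2) / 2 + C₃ / 4) 0
        (fun t => by rw [hD' t]; ring) y
      rw [hq]; ring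
    have hE'' : ∀ y : ℝ, deriv (deriv E) y = 2 * deriv A 0 + 2 * C₆ := fun y => by
      linear_combination e3 0 y
    have hA' : ∀ x : ℝ, deriv A x
        = deriv A 0 + ((2 * deriv D 1 - 2 * deriv D 0 - C₃ / 2) / 4 + C₃ / 8 - C₃ / 2) * x :=
      fun x => by
      linear_combination - (e3 x 0) / 2 + (hE'' 0) / 2 + x / 2 * (hD'' 0)
    have hk : 2 * deriv D 1 - 2 * deriv D 0 - C₃ / 2 = -(C₃ / 2) := by
      have h1 := hA'' 0
      have h2 := deriv_quad (deriv A) (deriv A 0)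
        ((2 * deriv D 1 - 2 * deriv D 0 - C₃ / 2) / 4 + C₃ / 8 - C₃ / 2) 0
        (fun t => by rw [hA' t]; ring) 0
      linarith [h1, h2]
    have hAval := integrate A hA1 (deriv A 0) (-(C₃ / 2))
      (fun t => by linear_combination hA' t + t / 4 * hk)
    have hDval := integrate D hD1 (deriv D 0) 0
      (fun t => by linear_combination hD' t + t / 2 * hk)
    have hB' : ∀ t : ℝ, deriv B t = deriv B 0 + (2 * deriv D 0 - C₇) * t := by
      intro t
      have := integrate (deriv B) hB2 (2 * deriv D 0 - C₇) 0
        (fun s => by linear_combination hB'' s) t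
      linear_combination this
    have hBval := integrate B hB1 (deriv B 0) (2 * deriv D 0 - C₇) hB'
    have hE' : ∀ t : ℝ, deriv E t = deriv E 0 + (2 * deriv A 0 + 2 * C₆) * t := by
      intro t
      have := integrate (deriv E) hE2 (2 * deriv A 0 + 2 * C₆) 0
        (fun s => by linear_combination hE'' s) t
      linear_combination this
    have hEval := integrate E hE1 (deriv E 0) (2 * deriv A 0 + 2 * C₆) hE'
    refine ⟨deriv D 0, 2 * deriv A 0 + 2 * C₆, deriv B 0, A 0, B 0, D 0, deriv E 0, E 0, ?_⟩
    intro x y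
    constructor
    · linear_combination step1 x y + hBval x + y * hAval x
    · linear_combination step2 x y + hEval y + x * hDval y
  · rintro ⟨a₁, a₂, a₃, a₄, a₅, a₆, a₇, a₈, hs⟩
    intro x y
    have Hpxξ : ∀ u v : ℝ, px ξ1 u v
        = (a₃ + a₂ / 2 * v - C₆ * v) + 2 * (a₁ - C₃ / 4 * v - C₇ / 2) * u := by
      intro u v
      show deriv (fun t => ξ1 t v) u = _
      exact deriv_quad _ (a₄ * v + a₅) (a₃ + a₂ / 2 * v - C₆ * v)
        (a₁ - C₃ / 4 * v - C₇ / 2) (fun t => by rw [(hs t v).1]; ring) u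
    have Hpyξ : ∀ u v : ℝ, py ξ1 u v
        = (-(C₃ / 4) * u ^ 2 - C₆ * u + a₂ / 2 * u + a₄) + 2 * 0 * v := by
      intro u v
      show deriv (fun t => ξ1 u t) v = _
      exact deriv_quad _ (-(C₇ / 2) * u ^ 2 + a₁ * u ^ 2 + a₃ * u + a₅)
        (-(C₃ / 4) * u ^ 2 - C₆ * u + a₂ / 2 * u + a₄) 0
        (fun t => by rw [(hs u t).1]; ring) v
    have Hpxη : ∀ u v : ℝ, px η1 u v
        = (a₁ * v + a₆) + 2 * (C₁ / 2 * v + C₂ / 2) * u := by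
      intro u v
      show deriv (fun t => η1 t v) u = _
      exact deriv_quad _ (a₂ / 2 * v ^ 2 + a₇ * v + a₈) (a₁ * v + a₆)
        (C₁ / 2 * v + C₂ / 2) (fun t => by rw [(hs t v).2]; ring) u
    have Hpyη : ∀ u v : ℝ, py η1 u v
        = (C₁ / 2 * u ^ 2 + a₁ * u + a₇) + 2 * (a₂ / 2) * v := by
      intro u v
      show deriv (fun t => η1 u t) v = _
      exact deriv_quad _ (C₂ / 2 * u ^ 2 + a₆ * u + a₈)
        (C₁ / 2 * u ^ 2 + a₁ * u + a₇) (a₂ / 2)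
        (fun t => by rw [(hs u t).2]; ring) v
    refine ⟨?_, ?_, ?_, ?_⟩
    · show deriv (fun t => px η1 t y) x = _
      have := deriv_quad (fun t => px η1 t y) (a₁ * y + a₆) (2 * (C₁ / 2 * y + C₂ / 2)) 0
        (fun t => by show px η1 t y = _; rw [Hpxη t y]; ring) x
      rw [this]; ring
    · have h1 : px (py η1) x y = a₁ + 2 * (C₁ / 2) * x := by
        show deriv (fun t => py η1 t y) x = _
        exact deriv_quad _ (a₇ + a₂ * y) a₁ (C₁ / 2)
          (fun t => by show py η1 t y = _; rw [Hpyη t y]; ring) x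
      have h2 : px (px ξ1) x y = 2 * (a₁ - C₃ / 4 * y - C₇ / 2) + 2 * 0 * x := by
        show deriv (fun t => px ξ1 t y) x = _
        exact deriv_quad _ (a₃ + a₂ / 2 * y - C₆ * y) (2 * (a₁ - C₃ / 4 * y - C₇ / 2)) 0
          (fun t => by show px ξ1 t y = _; rw [Hpxξ t y]; ring) x
      rw [h1, h2]; ring
    · have h1 : py (py η1) x y = a₂ + 2 * 0 * y := by
        show deriv (fun t => py η1 x t) y = _
        exact deriv_quad _ (C₁ / 2 * x ^ 2 + a₁ * x + a₇) a₂ 0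
          (fun t => by show py η1 x t = _; rw [Hpyη x t]; ring) y
      have h2 : px (py ξ1) x y = (a₂ / 2 - C₆) + 2 * (-(C₃ / 4)) * x := by
        show deriv (fun t => py ξ1 t y) x = _
        exact deriv_quad _ a₄ (a₂ / 2 - C₆) (-(C₃ / 4))
          (fun t => by show py ξ1 t y = _; rw [Hpyξ t y]; ring) x
      rw [h1, h2]; ring
    · show deriv (fun t => py ξ1 x t) y = _
      have := deriv_quad (fun t => py ξ1 x t)
        (-(C₃ / 4) * x ^ 2 - C₆ * x + a₂ / 2 * x + a₄) 0 0
        (fun t => by show py ξ1 x t = _; rw [Hpyξ x t]; ring) y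
      rw [this]; ring
end

section
/- Fix p ∈ ℝ with p ≠ 0 and constants α₁, …, α₈ ∈ ℝ. A smooth function ζ : ℝ² → ℝ satisfies the PDE ζ_xx + 2p ζ_xy + p² ζ_yy = (−α₁ y − α₂) p⁻² + (4α₁ x − (α₃/2) y − 2α₄ + 3α₇) p⁻¹ + 2α₃ x + 4α₆ for all (x, y) ∈ ℝ² if and only if there exist smooth functions R₁, R₂ : ℝ → ℝ such that ζ(x, y) = R₁(y − p x) + x R₂(y − p x) − ((α₁/2) x² y + (α₂/2) x²) p⁻² + (α₁ x³ − (α₃/4) x² y − α₄ x² + (3α₇/2) x²) p⁻¹ + (α₃/2) x³ + 2 α₆ x². -/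
open Function

private lemma hline (y q x : ℝ) : HasDerivAt (fun t : ℝ => (t, y + q * t)) ((1:ℝ), q) x := by
  have h2 : HasDerivAt (fun t : ℝ => y + q * t) q x := by
    simpa using ((hasDerivAt_id x).const_mul q).const_add y
  exact (hasDerivAt_id x).prodMk h2

private lemma vline (x y : ℝ) : HasDerivAt (fun t : ℝ => (x, t)) ((0:ℝ), (1:ℝ)) y :=
  (hasDerivAt_const y x).prodMk (hasDerivAt_id y)

private lemma expand_bilinear (B : ℝ × ℝ →L[ℝ] ℝ × ℝ →L[ℝ] ℝ)
    (hsym : B (0, 1) (1, 0) = B (1, 0) (0, 1)) (p : ℝ) :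
    B (1, p) (1, p)
      = B (1, 0) (1, 0) + 2 * p * B (1, 0) (0, 1) + p ^ 2 * B (0, 1) (0, 1) := by
  have hv : ((1 : ℝ), p) = (1, 0) + p • ((0 : ℝ), (1 : ℝ)) := by
    simp [Prod.ext_iff]
  rw [hv]
  simp only [map_add, map_smul, ContinuousLinearMap.add_apply,
    ContinuousLinearMap.smul_apply, smul_eq_mul, hsym]
  ring

section

variable (f : ℝ → ℝ → ℝ) (hf : ContDiff ℝ (⊤ : ℕ∞) (uncurry f))
include hf

private lemma slant_hasDerivAt (y q x : ℝ) :
    HasDerivAt (fun t => f t (y + q * t)) (fderiv ℝ (uncurry f) (x, y + q * x) (1, q)) x := by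
  have hF := (hf.differentiable (by simp) (x, y + q * x)).hasFDerivAt
  exact hF.comp_hasDerivAt x (hline y q x)

private lemma G_slant_hasDerivAt (v : ℝ × ℝ) (y q x : ℝ) :
    HasDerivAt (fun t => fderiv ℝ (uncurry f) (t, y + q * t) v)
      (fderiv ℝ (fderiv ℝ (uncurry f)) (x, y + q * x) (1, q) v) x := by
  have hG : ContDiff ℝ (⊤ : ℕ∞) (fderiv ℝ (uncurry f)) := hf.fderiv_right (by simp)
  have hG' := (hG.differentiable (by simp) (x, y + q * x)).hasFDerivAt
  have h1 : HasDerivAt (fun t => fderiv ℝ (uncurry f) (t, y + q * t))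
      (fderiv ℝ (fderiv ℝ (uncurry f)) (x, y + q * x) (1, q)) x :=
    hG'.comp_hasDerivAt x (hline y q x)
  simpa using h1.clm_apply (hasDerivAt_const x v)

private lemma G_vert_hasDerivAt (v : ℝ × ℝ) (x y : ℝ) :
    HasDerivAt (fun t => fderiv ℝ (uncurry f) (x, t) v)
      (fderiv ℝ (fderiv ℝ (uncurry f)) (x, y) (0, 1) v) y := by
  have hG : ContDiff ℝ (⊤ : ℕ∞) (fderiv ℝ (uncurry f)) := hf.fderiv_right (by simp)
  have hG' := (hG.differentiable (by simp) (x, y)).hasFDerivAt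
  have h1 : HasDerivAt (fun t => fderiv ℝ (uncurry f) (x, t))
      (fderiv ℝ (fderiv ℝ (uncurry f)) (x, y) (0, 1)) y :=
    hG'.comp_hasDerivAt y (vline x y)
  simpa using h1.clm_apply (hasDerivAt_const y v)

private lemma px_eq (x y : ℝ) :
    px f x y = fderiv ℝ (uncurry f) (x, y) (1, 0) := by
  have := slant_hasDerivAt f hf y 0 x
  simp only [zero_mul, add_zero] at this
  exact this.deriv

private lemma py_eq (x y : ℝ) :
    py f x y = fderiv ℝ (uncurry f) (x, y) (0, 1) := by
  have hF := (hf.differentiable (by simp) (x, y)).hasFDerivAt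
  exact (hF.comp_hasDerivAt y (vline x y)).deriv

private lemma pxx_eq (x y : ℝ) :
    px (px f) x y = fderiv ℝ (fderiv ℝ (uncurry f)) (x, y) (1, 0) (1, 0) := by
  have h : (fun t => px f t y) = fun t => fderiv ℝ (uncurry f) (t, y) (1, 0) :=
    funext fun t => px_eq f hf t y
  show deriv (fun t => px f t y) x = _
  rw [h]
  have := G_slant_hasDerivAt f hf (1, 0) y 0 x
  simp only [zero_mul, add_zero] at this
  exact this.deriv

private lemma pxy_eq (x y : ℝ) :
    px (py f) x y = fderiv ℝ (fderiv ℝ (uncurry f)) (x, y) (1, 0) (0, 1) := by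
  have h : (fun t => py f t y) = fun t => fderiv ℝ (uncurry f) (t, y) (0, 1) :=
    funext fun t => py_eq f hf t y
  show deriv (fun t => py f t y) x = _
  rw [h]
  have := G_slant_hasDerivAt f hf (0, 1) y 0 x
  simp only [zero_mul, add_zero] at this
  exact this.deriv

private lemma pyy_eq (x y : ℝ) :
    py (py f) x y = fderiv ℝ (fderiv ℝ (uncurry f)) (x, y) (0, 1) (0, 1) := by
  have h : (fun t => py f x t) = fun t => fderiv ℝ (uncurry f) (x, t) (0, 1) :=
    funext fun t => py_eq f hf x t
  show deriv (fun t => py f x t) y = _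
  rw [h]
  exact (G_vert_hasDerivAt f hf (0, 1) x y).deriv

private lemma symm_snd (x y : ℝ) :
    fderiv ℝ (fderiv ℝ (uncurry f)) (x, y) (0, 1) (1, 0)
      = fderiv ℝ (fderiv ℝ (uncurry f)) (x, y) (1, 0) (0, 1) := by
  have hG : ContDiff ℝ (⊤ : ℕ∞) (fderiv ℝ (uncurry f)) := hf.fderiv_right (by simp)
  exact second_derivative_symmetric
    (fun z => (hf.differentiable (by simp) z).hasFDerivAt)
    ((hG.differentiable (by simp) (x, y)).hasFDerivAt) _ _

private lemma key_slant (p u x : ℝ) :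
    HasDerivAt (fun t => fderiv ℝ (uncurry f) (t, u + p * t) (1, p))
      (px (px f) x (u + p * x) + 2 * p * px (py f) x (u + p * x)
        + p ^ 2 * py (py f) x (u + p * x)) x := by
  have h := G_slant_hasDerivAt f hf (1, p) u p x
  have hB := expand_bilinear (fderiv ℝ (fderiv ℝ (uncurry f)) (x, u + p * x))
    (symm_snd f hf x (u + p * x)) p
  rw [hB, ← pxx_eq f hf, ← pxy_eq f hf, ← pyy_eq f hf] at h
  exact h

end

private lemma hid (x : ℝ) : HasDerivAt (fun t : ℝ => t) 1 x := hasDerivAt_id' x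

private lemma hasDerivAt_comp_line (R : ℝ → ℝ) (hR : Differentiable ℝ R) (y p x : ℝ) :
    HasDerivAt (fun t => R (y - p * t)) (-p * deriv R (y - p * x)) x := by
  have hi : HasDerivAt (fun t : ℝ => y - p * t) (-p) x := by
    simpa using ((hasDerivAt_id x).const_mul p).const_sub y
  simpa [mul_comm, Function.comp_def] using ((hR (y - p * x)).hasDerivAt.comp x hi)

private lemma hasDerivAt_comp_vert (R : ℝ → ℝ) (hR : Differentiable ℝ R) (c y : ℝ) :
    HasDerivAt (fun t => R (t - c)) (deriv R (y - c)) y := by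
  have hi : HasDerivAt (fun t : ℝ => t - c) 1 y := (hasDerivAt_id y).sub_const c
  simpa [Function.comp_def] using ((hR (y - c)).hasDerivAt.comp y hi)

private lemma cubic_hasDerivAt (a b x : ℝ) :
    HasDerivAt (fun t : ℝ => a * t ^ 3 + b * t ^ 2) (3 * a * x ^ 2 + 2 * b * x) x := by
  have h := ((hasDerivAt_pow 3 x).const_mul a).add ((hasDerivAt_pow 2 x).const_mul b)
  refine h.congr_deriv ?_
  push_cast
  ring

private lemma quadlin_hasDerivAt (a b x : ℝ) :
    HasDerivAt (fun t : ℝ => a * t ^ 2 + b * t) (2 * a * x + b) x := by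
  have h := ((hasDerivAt_pow 2 x).const_mul a).add ((hasDerivAt_id x).const_mul b)
  refine h.congr_deriv ?_
  push_cast
  ring

private lemma deriv_contDiff {R : ℝ → ℝ} (hR : ContDiff ℝ (⊤ : ℕ∞) R) :
    ContDiff ℝ (⊤ : ℕ∞) (deriv R) := by
  have h : ContDiff ℝ (⊤ : ℕ∞) fun x => fderiv ℝ R x 1 :=
    (hR.fderiv_right (by simp)).clm_apply contDiff_const
  simpa only [fderiv_apply_one_eq_deriv] using h

/-- General solution of the nonhomogeneous PDE arising in the computation of
first-order (contact) approximate symmetry components of `y'' = ε (y')⁻¹`. -/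
theorem general_solution_of_nonhomogeneous_characteristic_PDE
    (p : ℝ) (hp : p ≠ 0) (α₁ α₂ α₃ α₄ α₅ α₆ α₇ α₈ : ℝ)
    (ζ : ℝ → ℝ → ℝ) (hζ : ContDiff ℝ (⊤ : ℕ∞) (Function.uncurry ζ)) :
    (∀ x y : ℝ,
      px (px ζ) x y + 2 * p * px (py ζ) x y + p ^ 2 * py (py ζ) x y
        = (-α₁ * y - α₂) * p⁻¹ ^ 2
          + (4 * α₁ * x - α₃ / 2 * y - 2 * α₄ + 3 * α₇) * p⁻¹
          + 2 * α₃ * x + 4 * α₆)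
    ↔ ∃ R₁ R₂ : ℝ → ℝ, ContDiff ℝ (⊤ : ℕ∞) R₁ ∧ ContDiff ℝ (⊤ : ℕ∞) R₂ ∧
        ∀ x y : ℝ,
          ζ x y = R₁ (y - p * x) + x * R₂ (y - p * x)
            - (α₁ / 2 * x ^ 2 * y + α₂ / 2 * x ^ 2) * p⁻¹ ^ 2
            + (α₁ * x ^ 3 - α₃ / 4 * x ^ 2 * y - α₄ * x ^ 2 + 3 * α₇ / 2 * x ^ 2) * p⁻¹
            + α₃ / 2 * x ^ 3 + 2 * α₆ * x ^ 2 := by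
  constructor
  · -- forward direction
    intro H
    refine ⟨fun u => ζ 0 u, fun u => fderiv ℝ (uncurry ζ) (0, u) (1, p), ?_, ?_, ?_⟩
    · have h : ContDiff ℝ (⊤ : ℕ∞) (uncurry ζ ∘ fun u : ℝ => ((0 : ℝ), u)) :=
        hζ.comp (contDiff_const.prodMk contDiff_id)
      exact h
    · have h1 : ContDiff ℝ (⊤ : ℕ∞) (fun u : ℝ => fderiv ℝ (uncurry ζ) (0, u)) :=
        (hζ.fderiv_right (by simp)).comp (contDiff_const.prodMk contDiff_id)
      exact h1.clm_apply contDiff_const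
    · intro x y
      dsimp only
      set u := y - p * x with hu
      have huy : u + p * x = y := by rw [hu]; ring
      set A : ℝ := α₁ * p⁻¹ + α₃ / 2 + p * (-(α₁ / 2) * p⁻¹ ^ 2 - α₃ / 4 * p⁻¹) with hA
      set B : ℝ := (-(α₁ / 2) * p⁻¹ ^ 2 - α₃ / 4 * p⁻¹) * u
        + (-(α₂ / 2) * p⁻¹ ^ 2 + (-α₄ + 3 * α₇ / 2) * p⁻¹ + 2 * α₆) with hB
      -- the slope function has zero derivative
      have hd0 : ∀ t : ℝ, HasDerivAt
          (fun s => fderiv ℝ (uncurry ζ) (s, u + p * s) (1, p)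
            - (3 * A * s ^ 2 + 2 * B * s)) 0 t := by
        intro t
        have h1 := key_slant ζ hζ p u t
        have h2 := quadlin_hasDerivAt (3 * A) (2 * B) t
        have h3 := h1.sub h2
        have hz : px (px ζ) t (u + p * t) + 2 * p * px (py ζ) t (u + p * t)
            + p ^ 2 * py (py ζ) t (u + p * t) - (2 * (3 * A) * t + 2 * B) = 0 := by
          rw [H t (u + p * t), hA, hB, hu]
          field_simp
          ring
        exact hz ▸ h3
      have hdiff : Differentiable ℝ (fun s => fderiv ℝ (uncurry ζ) (s, u + p * s) (1, p)
          - (3 * A * s ^ 2 + 2 * B * s)) := fun t => (hd0 t).differentiableAt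
      have hc0 : ∀ t : ℝ,
          fderiv ℝ (uncurry ζ) (t, u + p * t) (1, p) - (3 * A * t ^ 2 + 2 * B * t)
            = fderiv ℝ (uncurry ζ) (0, u) (1, p) := by
        intro t
        have h := is_const_of_deriv_eq_zero hdiff (fun s => (hd0 s).deriv) t 0
        rw [h]
        norm_num
      have hψ : ∀ t : ℝ, HasDerivAt
          (fun s => ζ s (u + p * s) - (A * s ^ 3 + B * s ^ 2))
          (fderiv ℝ (uncurry ζ) (t, u + p * t) (1, p) - (3 * A * t ^ 2 + 2 * B * t)) t :=
        fun t => (slant_hasDerivAt ζ hζ u p t).sub (cubic_hasDerivAt A B t)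
      have hψ' : ∀ t : ℝ, HasDerivAt
          (fun s => ζ s (u + p * s) - (A * s ^ 3 + B * s ^ 2)
            - fderiv ℝ (uncurry ζ) (0, u) (1, p) * s) 0 t := by
        intro t
        have h := (hψ t).sub ((hid t).const_mul
          (fderiv ℝ (uncurry ζ) (0, u) (1, p)))
        rw [hc0 t] at h
        simpa [Pi.sub_def] using h
      have hfin := is_const_of_deriv_eq_zero
        (fun t => (hψ' t).differentiableAt) (fun t => (hψ' t).deriv) x 0
      rw [huy] at hfin
      have hmain : ζ x y = ζ 0 u + fderiv ℝ (uncurry ζ) (0, u) (1, p) * x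
          + (A * x ^ 3 + B * x ^ 2) := by
        have h0 : u + p * 0 = u := by ring
        rw [h0] at hfin
        norm_num at hfin
        linarith
      rw [hmain, hA, hB, hu]
      field_simp
      ring
  · -- backward direction
    rintro ⟨R₁, R₂, hR₁, hR₂, hval⟩
    intro x y
    have dR₁ : Differentiable ℝ R₁ := hR₁.differentiable (by simp)
    have dR₂ : Differentiable ℝ R₂ := hR₂.differentiable (by simp)
    have ddR₁ : Differentiable ℝ (deriv R₁) := (deriv_contDiff hR₁).differentiable (by simp)
    have ddR₂ : Differentiable ℝ (deriv R₂) := (deriv_contDiff hR₂).differentiable (by simp)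
    set K : ℝ := α₁ * p⁻¹ + α₃ / 2 with hK
    set D : ℝ := -(α₁ / 2) * p⁻¹ ^ 2 - α₃ / 4 * p⁻¹ with hD
    set E : ℝ := -(α₂ / 2) * p⁻¹ ^ 2 + (-α₄ + 3 * α₇ / 2) * p⁻¹ + 2 * α₆ with hE
    have hζ' : ∀ a b : ℝ, ζ a b = R₁ (b - p * a) + a * R₂ (b - p * a)
        + (K * a ^ 3 + (D * b + E) * a ^ 2) := by
      intro a b
      rw [hval a b, hK, hD, hE]
      ring
    have hpx : ∀ a b : ℝ, px ζ a b = -p * deriv R₁ (b - p * a)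
        + (1 * R₂ (b - p * a) + a * (-p * deriv R₂ (b - p * a)))
        + (3 * K * a ^ 2 + 2 * (D * b + E) * a) := by
      intro a b
      show deriv (fun t => ζ t b) a = _
      rw [show (fun t => ζ t b) = fun t => R₁ (b - p * t) + t * R₂ (b - p * t)
          + (K * t ^ 3 + (D * b + E) * t ^ 2) from funext fun t => hζ' t b]
      exact (((hasDerivAt_comp_line R₁ dR₁ b p a).add
        ((hid a).mul (hasDerivAt_comp_line R₂ dR₂ b p a))).add
        (cubic_hasDerivAt K (D * b + E) a)).deriv
    have hpy : ∀ a b : ℝ, py ζ a b = deriv R₁ (b - p * a) + a * deriv R₂ (b - p * a)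
        + D * a ^ 2 := by
      intro a b
      show deriv (fun t => ζ a t) b = _
      rw [show (fun t => ζ a t) = fun t => R₁ (t - p * a) + a * R₂ (t - p * a)
          + (K * a ^ 3 + (D * t + E) * a ^ 2) from funext fun t => hζ' a t]
      have h1 := hasDerivAt_comp_vert R₁ dR₁ (p * a) b
      have h2 := (hasDerivAt_comp_vert R₂ dR₂ (p * a) b).const_mul a
      have h3 : HasDerivAt (fun t : ℝ => K * a ^ 3 + (D * t + E) * a ^ 2) (D * a ^ 2) b := by
        have h := ((((hid b).const_mul D).add_const E).mul_const
          (a ^ 2)).const_add (K * a ^ 3)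
        simpa using h
      refine ((h1.add h2).add h3).deriv.trans ?_
      ring
    have hpxx : px (px ζ) x y = p ^ 2 * deriv (deriv R₁) (y - p * x)
        - 2 * p * deriv R₂ (y - p * x) + p ^ 2 * x * deriv (deriv R₂) (y - p * x)
        + 6 * K * x + 2 * (D * y + E) := by
      show deriv (fun t => px ζ t y) x = _
      rw [show (fun t => px ζ t y) = fun t => -p * deriv R₁ (y - p * t)
          + (1 * R₂ (y - p * t) + t * (-p * deriv R₂ (y - p * t)))
          + (3 * K * t ^ 2 + 2 * (D * y + E) * t) from funext fun t => hpx t y]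
      have h1 := (hasDerivAt_comp_line (deriv R₁) ddR₁ y p x).const_mul (-p)
      have h2 := (hasDerivAt_comp_line R₂ dR₂ y p x).const_mul (1 : ℝ)
      have h3 := (hid x).mul
        ((hasDerivAt_comp_line (deriv R₂) ddR₂ y p x).const_mul (-p))
      have h4 := quadlin_hasDerivAt (3 * K) (2 * (D * y + E)) x
      refine ((h1.add (h2.add h3)).add h4).deriv.trans ?_
      ring
    have hpxy : px (py ζ) x y = -p * deriv (deriv R₁) (y - p * x)
        + deriv R₂ (y - p * x) - p * x * deriv (deriv R₂) (y - p * x)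
        + 2 * D * x := by
      show deriv (fun t => py ζ t y) x = _
      rw [show (fun t => py ζ t y) = fun t => deriv R₁ (y - p * t)
          + t * deriv R₂ (y - p * t) + D * t ^ 2 from funext fun t => hpy t y]
      have h1 := hasDerivAt_comp_line (deriv R₁) ddR₁ y p x
      have h2 := (hid x).mul (hasDerivAt_comp_line (deriv R₂) ddR₂ y p x)
      have h3 := (hasDerivAt_pow 2 x).const_mul D
      refine ((h1.add h2).add h3).deriv.trans ?_
      push_cast
      ring
    have hpyy : py (py ζ) x y = deriv (deriv R₁) (y - p * x)
        + x * deriv (deriv R₂) (y - p * x) := by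
      show deriv (fun t => py ζ x t) y = _
      rw [show (fun t => py ζ x t) = fun t => deriv R₁ (t - p * x)
          + x * deriv R₂ (t - p * x) + D * x ^ 2 from funext fun t => hpy x t]
      exact (((hasDerivAt_comp_vert (deriv R₁) ddR₁ (p * x) y).add
        ((hasDerivAt_comp_vert (deriv R₂) ddR₂ (p * x) y).const_mul x)).add_const
        (D * x ^ 2)).deriv
    rw [hpxx, hpxy, hpyy, hK, hD, hE]
    linear_combination (-2 * α₁ * x * p⁻¹ - α₃ * x) * mul_inv_cancel₀ hp
end
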